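/- Let g_j be a sequence of Riemannian metrics on a fixed compact oriented manifold M with g_j ≥ (1 - C_j) g0 pointwise, C_j → 0, C_j ∈ [0,1), and Vol(M, g_j) → Vol(M, g0). Then liminf_j Vol(A, g_j) ≥ Vol(A, g0) for every measurable set A ⊂ M, and consequently Vol(A, g_j) → Vol(A, g0) for every measurable A. -/

import Mathlib

open MeasureTheory Matrix Filter

open scoped MatrixOrder in
/-- Loewner monotonicity of the determinant over ℝ. -/
lemma det_le_det_of_quadform_le {m : Type*} [Fintype m] [DecidableEq m]
    {A B : Matrix m m ℝ} (hA : A.PosDef) (hB : B.IsHermitian)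
    (h : ∀ v, v ⬝ᵥ A.mulVec v ≤ v ⬝ᵥ B.mulVec v) : A.det ≤ B.det := by
  set S := CFC.sqrt A with hSdef
  have hS : S.PosSemidef := (CFC.sqrt_nonneg A).posSemidef
  have hSS : S * S = A := CFC.sqrt_mul_sqrt_self A hA.posSemidef.nonneg
  have hdetA : 0 < A.det := hA.det_pos
  have hdetS : IsUnit S.det := by
    rw [isUnit_iff_ne_zero]
    intro h0
    rw [← hSS, det_mul, h0, mul_zero] at hdetA
    exact lt_irrefl 0 hdetA
  have hSt : Sᵀ = S := by
    rw [← conjTranspose_eq_transpose_of_trivial, hS.isHermitian]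
  have hSinvT : (S⁻¹)ᵀ = S⁻¹ := by rw [transpose_nonsing_inv, hSt]
  set D := S⁻¹ * B * S⁻¹ with hD
  have hDherm : D.IsHermitian := by
    have : (S⁻¹).IsHermitian := by
      rw [IsHermitian, conjTranspose_eq_transpose_of_trivial, hSinvT]
    have hB' := hB
    rw [IsHermitian] at *
    rw [hD, conjTranspose_mul, conjTranspose_mul, hB', this, Matrix.mul_assoc]
  have hquad : ∀ v : m → ℝ, v ⬝ᵥ v ≤ v ⬝ᵥ D.mulVec v := by
    intro v
    set w := S⁻¹ *ᵥ v with hw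
    have h1 : v ⬝ᵥ D.mulVec v = w ⬝ᵥ B.mulVec w := by
      rw [hD, ← mulVec_mulVec, ← mulVec_mulVec, dotProduct_mulVec v,
        ← mulVec_transpose, hSinvT]
    have h2 : w ⬝ᵥ A.mulVec w = v ⬝ᵥ v := by
      rw [← hSS, ← mulVec_mulVec, dotProduct_mulVec w, ← mulVec_transpose, hSt]
      have : S *ᵥ w = v := by
        rw [hw, mulVec_mulVec, Matrix.mul_nonsing_inv _ hdetS, one_mulVec]
      rw [this]
    rw [h1, ← h2]
    exact h w
  have heig : ∀ i, 1 ≤ hDherm.eigenvalues i := by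
    intro i
    have := hDherm.eigenvalues_eq i
    have hnorm : ‖hDherm.eigenvectorBasis i‖ = 1 :=
      hDherm.eigenvectorBasis.orthonormal.1 i
    set u : m → ℝ := ⇑(hDherm.eigenvectorBasis i) with hu
    have hsu : star u = u := by simp
    have huu : u ⬝ᵥ u = 1 := by
      have : (1 : ℝ) = ‖hDherm.eigenvectorBasis i‖ ^ 2 := by rw [hnorm]; norm_num
      rw [this, ← real_inner_self_eq_norm_sq]
      simp only [dotProduct, PiLp.inner_apply, hu, RCLike.inner_apply, conj_trivial]
    rw [this, hsu]
    simpa only [RCLike.re_to_real, huu] using hquad u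
  have hdetD : 1 ≤ D.det := by
    rw [hDherm.det_eq_prod_eigenvalues]
    calc (1:ℝ) = ∏ _i : m, 1 := by simp
      _ ≤ ∏ i, hDherm.eigenvalues i :=
        Finset.prod_le_prod (fun _ _ => zero_le_one) (fun i _ => heig i)
  have hDdet : D.det * A.det = B.det := by
    have hne : S.det ≠ 0 := isUnit_iff_ne_zero.mp hdetS
    rw [hD, det_mul, det_mul, ← hSS, det_mul, det_nonsing_inv, Ring.inverse_eq_inv']
    field_simp
  calc A.det = 1 * A.det := (one_mul _).symm
    _ ≤ D.det * A.det := by nlinarith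
    _ = B.det := hDdet

open MeasureTheory Filter



/-- flattened model of a compact oriented manifold as a compact
region `M ⊂ ℝⁿ`, with metrics given by smooth fields of positive definite
symmetric matrices and `Vol(A, g) = ∫_A √det g`.  If `g_j ≥ (1 - C_j) g₀`
pointwise with `C_j ∈ [0,1)`, `C_j → 0`, and `Vol(M, g_j) → Vol(M, g₀)`, then
`liminf_j Vol(A, g_j) ≥ Vol(A, g₀)` for every measurable `A ⊆ M`, and
consequently `Vol(A, g_j) → Vol(A, g₀)` for every such `A`. -/
theorem stmt_13 {n : ℕ} (M : Set (Fin n → ℝ))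
    (hM : IsCompact M) (hMmeas : MeasurableSet M)
    (G0 : (Fin n → ℝ) → Matrix (Fin n) (Fin n) ℝ)
    (G : ℕ → (Fin n → ℝ) → Matrix (Fin n) (Fin n) ℝ)
    (hG0smooth : ∀ i j, ContDiff ℝ (⊤ : ℕ∞) fun p => G0 p i j)
    (hGsmooth : ∀ k i j, ContDiff ℝ (⊤ : ℕ∞) fun p => G k p i j)
    (hG0pos : ∀ p ∈ M, (G0 p).PosDef) (hGpos : ∀ k, ∀ p ∈ M, (G k p).PosDef)
    (C : ℕ → ℝ) (hC : ∀ j, C j ∈ Set.Ico (0 : ℝ) 1)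
    (hC0 : Tendsto C atTop (nhds 0))
    (hcomp : ∀ j, ∀ p ∈ M, ∀ v : Fin n → ℝ,
      v ⬝ᵥ (G j p).mulVec v ≥ (1 - C j) * (v ⬝ᵥ (G0 p).mulVec v))
    (hvol : Tendsto (fun j => ∫ x in M, Real.sqrt (G j x).det) atTop
      (nhds (∫ x in M, Real.sqrt (G0 x).det))) :
    ∀ A ⊆ M, MeasurableSet A →
      (∫ x in A, Real.sqrt (G0 x).det) ≤
        atTop.liminf (fun j => ∫ x in A, Real.sqrt (G j x).det) ∧
      Tendsto (fun j => ∫ x in A, Real.sqrt (G j x).det) atTop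
        (nhds (∫ x in A, Real.sqrt (G0 x).det)) := by
  intro A hAM hAmeas
  classical
  -- continuity of the densities
  have hf0c : Continuous fun x => Real.sqrt (G0 x).det :=
    ((continuous_matrix fun i j => (hG0smooth i j).continuous).matrix_det).sqrt
  have hfc : ∀ k, Continuous fun x => Real.sqrt (G k x).det := fun k =>
    ((continuous_matrix fun i j => (hGsmooth k i j).continuous).matrix_det).sqrt
  -- integrability
  have hint0M : IntegrableOn (fun x => Real.sqrt (G0 x).det) M :=
    hf0c.continuousOn.integrableOn_compact hM
  have hintM : ∀ k, IntegrableOn (fun x => Real.sqrt (G k x).det) M := fun k =>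
    (hfc k).continuousOn.integrableOn_compact hM
  have hint0A : IntegrableOn (fun x => Real.sqrt (G0 x).det) A := hint0M.mono_set hAM
  have hintA : ∀ k, IntegrableOn (fun x => Real.sqrt (G k x).det) A := fun k =>
    (hintM k).mono_set hAM
  have hBsub : M \ A ⊆ M := Set.diff_subset
  have hBmeas : MeasurableSet (M \ A) := hMmeas.diff hAmeas
  have hint0B : IntegrableOn (fun x => Real.sqrt (G0 x).det) (M \ A) := hint0M.mono_set hBsub
  have hintB : ∀ k, IntegrableOn (fun x => Real.sqrt (G k x).det) (M \ A) := fun k =>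
    (hintM k).mono_set hBsub
  set c : ℕ → ℝ := fun j => Real.sqrt ((1 - C j) ^ n) with hc
  have hcnn : ∀ j, 0 ≤ c j := fun j => Real.sqrt_nonneg _
  -- pointwise comparison
  have hpt : ∀ j, ∀ p ∈ M, c j * Real.sqrt (G0 p).det ≤ Real.sqrt (G j p).det := by
    intro j p hp
    have h1C : 0 < 1 - C j := by have := (hC j).2; linarith
    have hApos : ((1 - C j) • G0 p).PosDef := by
      refine Matrix.PosDef.of_dotProduct_mulVec_pos ?_ (fun v hv => ?_)
      · have := (hG0pos p hp).1
        rw [Matrix.IsHermitian] at *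
        rw [Matrix.conjTranspose_smul, this]
        simp
      · rw [Matrix.smul_mulVec, dotProduct_smul, smul_eq_mul]
        have h0 := (hG0pos p hp).dotProduct_mulVec_pos hv
        have : (0:ℝ) < star v ⬝ᵥ (G0 p) *ᵥ v := h0
        positivity
    have hdet : (1 - C j) ^ n * (G0 p).det ≤ (G j p).det := by
      have := det_le_det_of_quadform_le hApos (hGpos j p hp).1 (fun v => by
        rw [Matrix.smul_mulVec, dotProduct_smul, smul_eq_mul]
        exact hcomp j p hp v)
      rwa [Matrix.det_smul, Fintype.card_fin] at this
    calc c j * Real.sqrt (G0 p).det = Real.sqrt ((1 - C j) ^ n * (G0 p).det) := by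
          rw [Real.sqrt_mul (by positivity)]
      _ ≤ Real.sqrt (G j p).det := Real.sqrt_le_sqrt hdet
  -- set-integral comparison on any measurable subset of M
  have hSetIneq : ∀ (T : Set (Fin n → ℝ)), T ⊆ M → MeasurableSet T → ∀ j,
      c j * ∫ x in T, Real.sqrt (G0 x).det ≤ ∫ x in T, Real.sqrt (G j x).det := by
    intro T hTM hTmeas j
    rw [← MeasureTheory.integral_const_mul]
    refine MeasureTheory.setIntegral_mono_on ((hint0M.mono_set hTM).const_mul _)
      ((hintM j).mono_set hTM) hTmeas (fun x hx => ?_)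
    exact hpt j x (hTM hx)
  -- c j → 1
  have hc1 : Tendsto c atTop (nhds 1) := by
    have h1 : Tendsto (fun j => (1 - C j) ^ n) atTop (nhds 1) := by
      have := (tendsto_const_nhds (x := (1:ℝ)) (f := atTop)).sub hC0
      rw [sub_zero] at this
      simpa using this.pow n
    have := (Real.continuous_sqrt.tendsto 1).comp h1
    rw [Real.sqrt_one] at this; exact this
  -- decomposition of the integral over M
  have hsplit : ∀ f : (Fin n → ℝ) → ℝ, IntegrableOn f M →
      (∫ x in M, f x) = (∫ x in A, f x) + ∫ x in M \ A, f x := by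
    intro f hf
    rw [← MeasureTheory.setIntegral_union (Set.disjoint_sdiff_right.mono_left le_rfl)
      hBmeas (hf.mono_set hAM) (hf.mono_set hBsub), Set.union_diff_cancel hAM]
  set I0A := ∫ x in A, Real.sqrt (G0 x).det with hI0A
  set I0B := ∫ x in M \ A, Real.sqrt (G0 x).det with hI0B
  have hM0split : (∫ x in M, Real.sqrt (G0 x).det) = I0A + I0B := hsplit _ hint0M
  -- squeeze
  have hlow : ∀ j, c j * I0A ≤ ∫ x in A, Real.sqrt (G j x).det :=
    fun j => hSetIneq A hAM hAmeas j
  have hup : ∀ j, (∫ x in A, Real.sqrt (G j x).det) ≤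
      (∫ x in M, Real.sqrt (G j x).det) - c j * I0B := by
    intro j
    have h1 := hSetIneq (M \ A) hBsub hBmeas j
    have h2 := hsplit _ (hintM j)
    linarith
  have hlowT : Tendsto (fun j => c j * I0A) atTop (nhds I0A) := by
    simpa using hc1.mul tendsto_const_nhds
  have hupT : Tendsto (fun j => (∫ x in M, Real.sqrt (G j x).det) - c j * I0B) atTop
      (nhds I0A) := by
    have := hvol.sub (hc1.mul (tendsto_const_nhds (x := I0B)))
    rw [hM0split] at this
    simpa using this
  have hT : Tendsto (fun j => ∫ x in A, Real.sqrt (G j x).det) atTop (nhds I0A) :=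
    tendsto_of_tendsto_of_tendsto_of_le_of_le hlowT hupT hlow hup
  exact ⟨le_of_eq hT.liminf_eq.symm, hT⟩
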